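/- Let Θ be a smooth symmetric d-multilinear form on a finite-dimensional ℂ-vector space V, i.e. for every u ∈ V, if Θ(u, …, u, v) = 0 for all v ∈ V then u = 0. Then the center Z(V,Θ) contains no nonzero nilpotent element: if φ ∈ Z(V,Θ) satisfies φ^m = 0 for some m ≥ 1, then φ = 0. -/
import Mathlib


/-- Let `Θ` be a smooth symmetric `d`-multilinear form on a
finite-dimensional `ℂ`-vector space `V` (i.e. `Θ(u, …, u, v) = 0` for all `v` implies
`u = 0`). Then the center `Z(V,Θ)` contains no nonzero nilpotent element: if `φ ∈ Z(V,Θ)`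
satisfies `φ^m = 0` for some `m ≥ 1`, then `φ = 0`. -/
theorem stmt_13 {V : Type*} [AddCommGroup V] [Module ℂ V] [FiniteDimensional ℂ V]
    {d : ℕ} (hd : 3 ≤ d)
    (Θ : MultilinearMap ℂ (fun _ : Fin d => V) ℂ)
    (hsymm : ∀ (σ : Equiv.Perm (Fin d)) (v : Fin d → V), Θ (v ∘ σ) = Θ v)
    (hsmooth : ∀ u : V,
      (∀ w : V, Θ (Function.update (fun _ => u) ⟨d - 1, by omega⟩ w) = 0) → u = 0)
    (φ : Module.End ℂ V)
    (hφ : ∀ v : Fin d → V,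
      Θ (Function.update v ⟨0, by omega⟩ (φ (v ⟨0, by omega⟩)))
        = Θ (Function.update v ⟨1, by omega⟩ (φ (v ⟨1, by omega⟩))))
    (m : ℕ) (hm : 1 ≤ m) (hnil : φ ^ m = 0) :
    φ = 0 := by
  have i0 : Fin d := ⟨0, by omega⟩
  set L : Fin d := ⟨d - 1, by omega⟩ with hL
  -- composition of an update with an equivalence
  have hcomp : ∀ (σ : Equiv.Perm (Fin d)) (w : Fin d → V) (a : Fin d) (x : V),
      (Function.update w (σ a) x) ∘ σ = Function.update (w ∘ σ) a x := by
    intro σ w a x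
    funext b
    simp [Function.comp, Function.update_apply, Equiv.apply_eq_iff_eq]
  -- φ can be moved from any slot to any other slot
  have move : ∀ (i j : Fin d), i ≠ j → ∀ v : Fin d → V,
      Θ (Function.update v i (φ (v i))) = Θ (Function.update v j (φ (v j))) := by
    intro i j hij v
    set I0 : Fin d := ⟨0, by omega⟩ with hI0
    set I1 : Fin d := ⟨1, by omega⟩ with hI1
    have h01 : I0 ≠ I1 := by simp [hI0, hI1, Fin.ext_iff]
    set j' : Fin d := Equiv.swap I0 i j with hj'def
    have hj'0 : j' ≠ I0 := by
      intro h
      apply hij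
      have := congrArg (Equiv.swap I0 i) h
      rw [hj'def] at this
      rw [Equiv.swap_apply_self, Equiv.swap_apply_left] at this
      exact this.symm
    set σ : Equiv.Perm (Fin d) := (Equiv.swap I0 i) * (Equiv.swap I1 j') with hσ
    have hσ0 : σ I0 = i := by
      have : (Equiv.swap I1 j') I0 = I0 :=
        Equiv.swap_apply_of_ne_of_ne h01 (Ne.symm hj'0)
      simp only [hσ, Equiv.Perm.mul_apply, this, Equiv.swap_apply_left]
    have hσ1 : σ I1 = j := by
      simp only [hσ, Equiv.Perm.mul_apply, Equiv.swap_apply_left, hj'def,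
        Equiv.swap_apply_self]
    calc Θ (Function.update v i (φ (v i)))
        = Θ ((Function.update v (σ I0) (φ (v (σ I0)))) ∘ σ) := by
          rw [hσ0]; exact (hsymm σ _).symm
      _ = Θ (Function.update (v ∘ σ) I0 (φ ((v ∘ σ) I0))) := by
          rw [hcomp]; rfl
      _ = Θ (Function.update (v ∘ σ) I1 (φ ((v ∘ σ) I1))) := hφ (v ∘ σ)
      _ = Θ ((Function.update v (σ I1) (φ (v (σ I1)))) ∘ σ) := by
          rw [hcomp]; rfl
      _ = Θ (Function.update v j (φ (v j))) := by
          rw [hσ1]; exact hsymm σ _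
  -- φ^a can be shifted from any slot to the last slot
  have shift : ∀ (a : ℕ) (i : Fin d), i ≠ L → ∀ v : Fin d → V,
      Θ (Function.update v i ((φ ^ a) (v i))) = Θ (Function.update v L ((φ ^ a) (v L))) := by
    intro a
    induction a with
    | zero => intro i _ v; simp
    | succ a ih =>
      intro i hiL v
      have h1 : (φ ^ (a + 1)) (v i) = (φ ^ a) (φ (v i)) := by
        rw [pow_succ]; rfl
      have h2 : φ ((φ ^ a) (v L)) = (φ ^ (a + 1)) (v L) := by
        rw [pow_succ']; rfl
      rw [h1]
      calc Θ (Function.update v i ((φ ^ a) (φ (v i))))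
          = Θ (Function.update (Function.update v i (φ (v i))) i
              ((φ ^ a) ((Function.update v i (φ (v i))) i))) := by
            rw [Function.update_self, Function.update_idem]
        _ = Θ (Function.update (Function.update v i (φ (v i))) L
              ((φ ^ a) ((Function.update v i (φ (v i))) L))) :=
            ih i hiL _
        _ = Θ (Function.update (Function.update v L ((φ ^ a) (v L))) i
              (φ ((Function.update v L ((φ ^ a) (v L))) i))) := by
            rw [Function.update_of_ne hiL.symm, Function.update_of_ne hiL,
              Function.update_comm hiL]
        _ = Θ (Function.update (Function.update v L ((φ ^ a) (v L))) L
              (φ ((Function.update v L ((φ ^ a) (v L))) L))) :=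
            move i L hiL _
        _ = Θ (Function.update v L ((φ ^ (a + 1)) (v L))) := by
            rw [Function.update_self, Function.update_idem, h2]
  -- the key identity: all powers can be collected in the last slot
  have key : ∀ (a : ℕ) (u x : V),
      Θ (Function.update (fun _ => (φ ^ a) u) L x)
        = Θ (Function.update (fun _ => u) L ((φ ^ (a * (d - 1))) x)) := by
    intro a u x
    have iter : ∀ n, n ≤ d - 1 →
        Θ (fun i : Fin d => if (i : ℕ) < n then u
            else if (i : ℕ) = d - 1 then (φ ^ (a * n)) x else (φ ^ a) u)
          = Θ (Function.update (fun _ => (φ ^ a) u) L x) := by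
      intro n
      induction n with
      | zero =>
        intro _
        congr 1
        funext i
        by_cases hi : i = L
        · rw [hi, Function.update_self]
          have : (L : ℕ) = d - 1 := rfl
          simp [this]
        · rw [Function.update_of_ne hi]
          have hival : (i : ℕ) ≠ d - 1 := fun h => hi (Fin.ext h)
          simp [hival]
      | succ n ih =>
        intro hn
        have hn' : n < d - 1 := by omega
        set In : Fin d := ⟨n, by omega⟩ with hIn
        have hInL : In ≠ L := by simp [hIn, hL, Fin.ext_iff]; omega
        set v : Fin d → V := fun i => if (i : ℕ) < n + 1 then u
            else if (i : ℕ) = d - 1 then (φ ^ (a * n)) x else (φ ^ a) u with hv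
        have e1 : (fun i : Fin d => if (i : ℕ) < n then u
            else if (i : ℕ) = d - 1 then (φ ^ (a * n)) x else (φ ^ a) u)
            = Function.update v In ((φ ^ a) (v In)) := by
          have hInval : (In : ℕ) = n := rfl
          funext i
          by_cases hi : i = In
          · rw [hi, Function.update_self]
            have hv1 : v In = u := by
              simp only [hv]
              simp [hInval]
            rw [hv1]
            simp [hInval, (show ¬ n < n by omega), (show n ≠ d - 1 by omega)]
          · rw [Function.update_of_ne hi]
            have hival : (i : ℕ) ≠ n := fun h => hi (Fin.ext (by rw [h, hInval]))
            simp only [hv]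
            by_cases h2 : (i : ℕ) < n
            · simp [h2, (show (i : ℕ) < n + 1 by omega)]
            · simp [h2, (show ¬ (i : ℕ) < n + 1 by omega)]
        have e2 : (fun i : Fin d => if (i : ℕ) < n + 1 then u
            else if (i : ℕ) = d - 1 then (φ ^ (a * (n + 1))) x else (φ ^ a) u)
            = Function.update v L ((φ ^ a) (v L)) := by
          have hLval : (L : ℕ) = d - 1 := rfl
          funext i
          by_cases hi : i = L
          · rw [hi, Function.update_self]
            have hv1 : v L = (φ ^ (a * n)) x := by
              simp only [hv]
              simp [hLval, (show ¬ d - 1 < n + 1 by omega)]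
            rw [hv1]
            have hpw : (φ ^ a) ((φ ^ (a * n)) x) = (φ ^ (a * (n + 1))) x := by
              rw [show a * (n + 1) = a + a * n by ring, pow_add]; rfl
            rw [hpw]
            simp [hLval, (show ¬ d - 1 < n + 1 by omega)]
          · rw [Function.update_of_ne hi]
            have hival : (i : ℕ) ≠ d - 1 := fun h => hi (Fin.ext h)
            simp only [hv, hival, if_false]
        rw [e2, ← shift a In hInL v, ← e1]
        exact ih (by omega)
    have final : (fun i : Fin d => if (i : ℕ) < d - 1 then u
        else if (i : ℕ) = d - 1 then (φ ^ (a * (d - 1))) x else (φ ^ a) u)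
        = Function.update (fun _ => u) L ((φ ^ (a * (d - 1))) x) := by
      funext i
      by_cases hi : i = L
      · rw [hi, Function.update_self]
        have : (L : ℕ) = d - 1 := rfl
        simp [this, (show ¬ d - 1 < d - 1 by omega)]
      · rw [Function.update_of_ne hi]
        have hival : (i : ℕ) ≠ d - 1 := fun h => hi (Fin.ext h)
        have hlt : (i : ℕ) < d - 1 := by omega
        simp [hlt]
    rw [← iter (d - 1) le_rfl, final]
  -- now conclude by (downward) induction on the nilpotency degree
  clear hcomp move shift i0
  revert hnil
  induction m, hm using Nat.le_induction with
  | base => intro h; rwa [pow_one] at h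
  | succ n hn ih =>
    intro h
    refine ih hsmooth hL key ?_
    apply LinearMap.ext
    intro u
    simp only [LinearMap.zero_apply]
    apply hsmooth
    intro w
    have := key n u w
    rw [this]
    have hz : φ ^ (n * (d - 1)) = 0 := by
      have h1 : n + 1 ≤ n * (d - 1) := by
        have h2 : 2 ≤ d - 1 := by omega
        calc n + 1 ≤ 2 * n := by omega
          _ ≤ (d - 1) * n := Nat.mul_le_mul_right n h2
          _ = n * (d - 1) := Nat.mul_comm _ _
      obtain ⟨c, hc⟩ : ∃ c, n * (d - 1) = (n + 1) + c := ⟨n * (d - 1) - (n + 1), by omega⟩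
      rw [hc, pow_add, h, zero_mul]
    rw [hz]
    simp
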